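/- Under the assumptions of the preceding law-of-large-numbers statement, the acceptance probability p_n = min(1, exp(h_n)) converges almost surely to 1 if f_σ(z) > 0 and to 0 if f_σ(z) < 0. -/

import Mathlib

/-!
Writing `W_i = z X_i + (1 - z) Y_i`, the log acceptance ratio is
`h_n = ∑_{i<n} (log z - W_i² / 2 + X_i² / 2) - log z`, a random walk whose increments are
i.i.d. functions of the pairs `(X_i, Y_i)`. Their mean is
`log z - ((z² + (1 - z)²) σ² + m²) / 2 + (σ² + m²) / 2 = f_σ(z)`, so by the strong law of large
numbers `h_n / n → f_σ(z)` almost surely. Hence `h_n → +∞` when `f_σ(z) > 0` and `h_n → -∞` when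
`f_σ(z) < 0`, which sends `min 1 (exp h_n)` to `1`, respectively `0`.
-/

open MeasureTheory ProbabilityTheory Filter Finset Topology

lemma tendsto_atTop_of_tendsto_div_natCast {u : ℕ → ℝ} {c : ℝ} (hc : 0 < c)
    (h : Tendsto (fun n ↦ u n / n) atTop (𝓝 c)) : Tendsto u atTop atTop := by
  refine (Tendsto.atTop_mul_pos hc tendsto_natCast_atTop_atTop h).congr' ?_
  filter_upwards [eventually_ne_atTop 0] with n hn
  field_simp

lemma tendsto_atBot_of_tendsto_div_natCast {u : ℕ → ℝ} {c : ℝ} (hc : c < 0)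
    (h : Tendsto (fun n ↦ u n / n) atTop (𝓝 c)) : Tendsto u atTop atBot := by
  refine tendsto_neg_atTop_iff.1 (tendsto_atTop_of_tendsto_div_natCast (neg_pos.2 hc) ?_)
  simpa only [neg_div] using h.neg

lemma tendsto_min_one_exp_of_tendsto_atTop {α : Type*} {l : Filter α} {u : α → ℝ}
    (h : Tendsto u l atTop) : Tendsto (fun a ↦ min 1 (Real.exp (u a))) l (𝓝 1) := by
  refine tendsto_const_nhds.congr' ?_
  filter_upwards [(Real.tendsto_exp_atTop.comp h).eventually_ge_atTop 1] with a ha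
  exact (min_eq_left ha).symm

lemma tendsto_min_one_exp_of_tendsto_atBot {α : Type*} {l : Filter α} {u : α → ℝ}
    (h : Tendsto u l atBot) : Tendsto (fun a ↦ min 1 (Real.exp (u a))) l (𝓝 0) := by
  simpa using (tendsto_const_nhds (x := (1 : ℝ))).min (Real.tendsto_exp_atBot.comp h)

noncomputable def stretchLogIncrement (z x y : ℝ) : ℝ :=
  Real.log z - (z * x + (1 - z) * y) ^ 2 / 2 + x ^ 2 / 2

lemma sum_stretchLogIncrement_sub_log (z : ℝ) (x y : ℕ → ℝ) (n : ℕ) :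
    ∑ i ∈ range n, stretchLogIncrement z (x i) (y i) - Real.log z
      = ((n : ℝ) - 1) * Real.log z - (1/2) * ∑ i ∈ range n, (z * x i + (1 - z) * y i) ^ 2
        + (1/2) * ∑ i ∈ range n, (x i) ^ 2 := by
  simp only [stretchLogIncrement, sum_add_distrib, sum_sub_distrib, sum_const, card_range,
    nsmul_eq_mul, mul_sum]
  ring_nf

lemma measurable_stretchLogIncrement (z : ℝ) :
    Measurable fun p : ℝ × ℝ ↦ stretchLogIncrement z p.1 p.2 := by
  unfold stretchLogIncrement
  fun_prop

namespace ProbabilityTheory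

variable {Ω : Type*} [MeasurableSpace Ω] {μ : Measure Ω}

theorem strong_law_ae_real_comp_prodMk [IsFiniteMeasure μ] {β : Type*} [MeasurableSpace β]
    {X Y : ℕ → Ω → β} (hindep : iIndepFun (fun p : Bool × ℕ ↦ if p.1 then X p.2 else Y p.2) μ)
    (hXid : ∀ i, IdentDistrib (X i) (X 0) μ μ) (hYid : ∀ i, IdentDistrib (Y i) (Y 0) μ μ)
    {g : β × β → ℝ} (hg : Measurable g) (hint : Integrable (fun ω ↦ g (X 0 ω, Y 0 ω)) μ) :
    ∀ᵐ ω ∂μ, Tendsto (fun n : ℕ ↦ (∑ i ∈ range n, g (X i ω, Y i ω)) / n) atTop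
      (𝓝 (∫ ω, g (X 0 ω, Y 0 ω) ∂μ)) := by
  have hmeas : ∀ p, AEMeasurable ((fun p : Bool × ℕ ↦ if p.1 then X p.2 else Y p.2) p) μ := by
    rintro ⟨_ | _, i⟩
    exacts [(hYid i).aemeasurable_fst, (hXid i).aemeasurable_fst]
  have hXY : ∀ i, X i ⟂ᵢ[μ] Y i := fun i ↦
    hindep.indepFun (i := (true, i)) (j := (false, i)) (by simp)
  refine strong_law_ae_real (fun i ω ↦ g (X i ω, Y i ω)) hint (fun i j hij ↦ ?_) fun i ↦
    ((hXid i).prodMk (hYid i) (hXY i) (hXY 0)).comp hg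
  exact (hindep.indepFun_prodMk_prodMk₀ hmeas (true, i) (false, i) (true, j) (false, j)
    (by simp [hij]) (by simp) (by simp) (by simp [hij])).comp hg hg

variable [IsProbabilityMeasure μ]

lemma integral_sq_eq_variance_add_sq {X : Ω → ℝ} (hX : MemLp X 2 μ) :
    ∫ ω, X ω ^ 2 ∂μ = Var[X; μ] + (∫ ω, X ω ∂μ) ^ 2 := by
  rw [variance_eq_sub hX]
  simp [Pi.pow_apply]

lemma IndepFun.integral_linear_comb_sq {X Y : Ω → ℝ} (hX : MemLp X 2 μ) (hY : MemLp Y 2 μ)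
    (h : X ⟂ᵢ[μ] Y) (a b : ℝ) :
    ∫ ω, (a * X ω + b * Y ω) ^ 2 ∂μ
      = a ^ 2 * Var[X; μ] + b ^ 2 * Var[Y; μ] + (a * μ[X] + b * μ[Y]) ^ 2 := by
  have hvar : Var[fun ω ↦ a * X ω + b * Y ω; μ] = a ^ 2 * Var[X; μ] + b ^ 2 * Var[Y; μ] := by
    have hind : (fun ω ↦ a * X ω) ⟂ᵢ[μ] (fun ω ↦ b * Y ω) :=
      h.comp (measurable_const_mul a) (measurable_const_mul b)
    rw [← variance_const_mul, ← variance_const_mul]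
    exact hind.variance_add (hX.const_mul a) (hY.const_mul b)
  have hmean : ∫ ω, a * X ω + b * Y ω ∂μ = a * μ[X] + b * μ[Y] := by
    rw [integral_add ((hX.integrable one_le_two).const_mul a)
      ((hY.integrable one_le_two).const_mul b), integral_const_mul, integral_const_mul]
  have hL : MemLp (fun ω ↦ a * X ω + b * Y ω) 2 μ := (hX.const_mul a).add (hY.const_mul b)
  rw [integral_sq_eq_variance_add_sq hL, hvar, hmean]

lemma integrable_stretchLogIncrement {X Y : Ω → ℝ} (hX : MemLp X 2 μ) (hY : MemLp Y 2 μ)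
    (z : ℝ) :
    Integrable (fun ω ↦ stretchLogIncrement z (X ω) (Y ω)) μ :=
  ((integrable_const _).sub
    (((hX.const_mul z).add (hY.const_mul (1 - z))).integrable_sq.div_const 2)).add
    (hX.integrable_sq.div_const 2)

lemma integral_stretchLogIncrement {X Y : Ω → ℝ} (hX : MemLp X 2 μ) (hY : MemLp Y 2 μ)
    (h : X ⟂ᵢ[μ] Y) (hmean : μ[X] = μ[Y]) (hvar : Var[X; μ] = Var[Y; μ]) (z : ℝ) :
    ∫ ω, stretchLogIncrement z (X ω) (Y ω) ∂μ = Real.log z - Var[X; μ] * z * (z - 1) := by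
  have hW : Integrable (fun ω ↦ (z * X ω + (1 - z) * Y ω) ^ 2 / 2) μ :=
    ((hX.const_mul z).add (hY.const_mul (1 - z))).integrable_sq.div_const 2
  have hX' : Integrable (fun ω ↦ X ω ^ 2 / 2) μ := hX.integrable_sq.div_const 2
  have hcW : Integrable (fun ω ↦ Real.log z - (z * X ω + (1 - z) * Y ω) ^ 2 / 2) μ :=
    (integrable_const _).sub hW
  simp only [stretchLogIncrement]
  rw [integral_add hcW hX', integral_sub (integrable_const _) hW, integral_div, integral_div,
    h.integral_linear_comb_sq hX hY, integral_sq_eq_variance_add_sq hX, ← hmean, ← hvar]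
  simp only [integral_const, probReal_univ, one_smul]
  ring

end ProbabilityTheory

theorem acceptance_probability_limit_general {Ω : Type*} [MeasurableSpace Ω] (μ : Measure Ω)
    [IsProbabilityMeasure μ] (X Y : ℕ → Ω → ℝ) (m σ : ℝ) (z : ℝ)
    (hindep : iIndepFun
      (fun p : Bool × ℕ => if p.1 then X p.2 else Y p.2) μ)
    (hXid : ∀ i, Measure.map (X i) μ = Measure.map (X 0) μ)
    (hYid : ∀ i, Measure.map (Y i) μ = Measure.map (Y 0) μ)
    (hX2 : ∀ i, MemLp (X i) 2 μ) (hY2 : ∀ i, MemLp (Y i) 2 μ)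
    (hXm : ∀ i, ∫ ω, X i ω ∂μ = m) (hYm : ∀ i, ∫ ω, Y i ω ∂μ = m)
    (hXv : ∀ i, variance (X i) μ = σ^2) (hYv : ∀ i, variance (Y i) μ = σ^2) :
    (0 < Real.log z - σ^2 * z * (z - 1) →
      ∀ᵐ ω ∂μ, Tendsto
        (fun n : ℕ => min 1 (Real.exp
          (((n : ℝ) - 1) * Real.log z
            - (1/2) * ∑ i ∈ Finset.range n, (z * X i ω + (1 - z) * Y i ω)^2
            + (1/2) * ∑ i ∈ Finset.range n, (X i ω)^2)))
        atTop (nhds 1)) ∧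
    (Real.log z - σ^2 * z * (z - 1) < 0 →
      ∀ᵐ ω ∂μ, Tendsto
        (fun n : ℕ => min 1 (Real.exp
          (((n : ℝ) - 1) * Real.log z
            - (1/2) * ∑ i ∈ Finset.range n, (z * X i ω + (1 - z) * Y i ω)^2
            + (1/2) * ∑ i ∈ Finset.range n, (X i ω)^2)))
        atTop (nhds 0)) := by
  have hXY : X 0 ⟂ᵢ[μ] Y 0 := hindep.indepFun (i := (true, 0)) (j := (false, 0)) (by simp)
  have hlim := strong_law_ae_real_comp_prodMk hindep
    (fun i ↦ ⟨(hX2 i).aemeasurable, (hX2 0).aemeasurable, hXid i⟩)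
    (fun i ↦ ⟨(hY2 i).aemeasurable, (hY2 0).aemeasurable, hYid i⟩)
    (measurable_stretchLogIncrement z) (integrable_stretchLogIncrement (hX2 0) (hY2 0) z)
  beta_reduce at hlim
  rw [integral_stretchLogIncrement (hX2 0) (hY2 0) hXY (by rw [hXm, hYm]) (by rw [hXv, hYv]),
    hXv] at hlim
  simp only [← sum_stretchLogIncrement_sub_log]
  refine ⟨fun hf ↦ ?_, fun hf ↦ ?_⟩ <;> filter_upwards [hlim] with ω hω
  · exact tendsto_min_one_exp_of_tendsto_atTop
      (tendsto_atTop_add_const_right _ _ (tendsto_atTop_of_tendsto_div_natCast hf hω))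
  · exact tendsto_min_one_exp_of_tendsto_atBot
      (tendsto_atBot_add_const_right _ _ (tendsto_atBot_of_tendsto_div_natCast hf hω))

/-- Under the same assumptions as the law of large numbers for the log acceptance ratio `h_n`,
the acceptance probability `p_n = min(1, exp h_n)` converges almost surely to `1` if
`f_σ(z) > 0` and to `0` if `f_σ(z) < 0`. -/
theorem acceptance_probability_limit {Ω : Type*} [MeasurableSpace Ω] (μ : Measure Ω)
    [IsProbabilityMeasure μ] (X Y : ℕ → Ω → ℝ) (m σ : ℝ) (z : ℝ) (hz : 0 < z)
    (hindep : iIndepFun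
      (fun p : Bool × ℕ => if p.1 then X p.2 else Y p.2) μ)
    (hXid : ∀ i, Measure.map (X i) μ = Measure.map (X 0) μ)
    (hYid : ∀ i, Measure.map (Y i) μ = Measure.map (Y 0) μ)
    (hX2 : ∀ i, MemLp (X i) 2 μ) (hY2 : ∀ i, MemLp (Y i) 2 μ)
    (hXm : ∀ i, ∫ ω, X i ω ∂μ = m) (hYm : ∀ i, ∫ ω, Y i ω ∂μ = m)
    (hXv : ∀ i, variance (X i) μ = σ^2) (hYv : ∀ i, variance (Y i) μ = σ^2) :
    (0 < Real.log z - σ^2 * z * (z - 1) →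
      ∀ᵐ ω ∂μ, Tendsto
        (fun n : ℕ => min 1 (Real.exp
          (((n : ℝ) - 1) * Real.log z
            - (1/2) * ∑ i ∈ Finset.range n, (z * X i ω + (1 - z) * Y i ω)^2
            + (1/2) * ∑ i ∈ Finset.range n, (X i ω)^2)))
        atTop (nhds 1)) ∧
    (Real.log z - σ^2 * z * (z - 1) < 0 →
      ∀ᵐ ω ∂μ, Tendsto
        (fun n : ℕ => min 1 (Real.exp
          (((n : ℝ) - 1) * Real.log z
            - (1/2) * ∑ i ∈ Finset.range n, (z * X i ω + (1 - z) * Y i ω)^2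
            + (1/2) * ∑ i ∈ Finset.range n, (X i ω)^2)))
        atTop (nhds 0)) :=
  acceptance_probability_limit_general μ X Y m σ z hindep hXid hYid hX2 hY2 hXm hYm hXv hYv
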